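/- arXiv:math/0208170 — 4 statements merged into one kernel-verified Lean document; each statement's English description precedes it below -/
import Mathlib

section
/- For every real q with 0 < q < 1 and every real x satisfying (1−q)|x| < 1, both series below converge absolutely and one has Σ_{k=0}^∞ (1−q)^k x^k / (q;q)_k = exp( Σ_{k=1}^∞ (1−q)^k x^k / (k(1−q^k)) ). -/
/-- The finite q-Pochhammer product `(q;q)_k = (1-q)(1-q^2)⋯(1-q^k)`, with `(q;q)_0 = 1`. -/
noncomputable def qPoch (q : ℝ) (k : ℕ) : ℝ := ∏ i ∈ Finset.range k, (1 - q ^ (i + 1))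

/-!
Put `F t = Σ t^k/(q;q)_k` and `S t = Σ t^(k+1)/((k+1)(1-q^(k+1)))`; the claim is
`F t = exp (S t)` at `t = (1-q)x`. Both series converge for `|t| < 1`, and comparing coefficients
gives the functional equations `(1-t) F t = F (qt)` and `S t - S (qt) = -log (1-t)`. Hence
`G t = F t * exp (-S t)` satisfies `G (qt) = G t`, so `G t = G (q^n t) → G 0 = 1` by continuity
at `0`.
-/

open Filter Topology Metric

theorem apply_eq_apply_zero_of_apply_mul_eq {𝕜 X : Type*} [NormedField 𝕜] [TopologicalSpace X]
    [T2Space X] {f : 𝕜 → X} {q t : 𝕜} (hq : ‖q‖ < 1) (hf : ContinuousAt f 0)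
    (hfq : ∀ s, ‖s‖ ≤ ‖t‖ → f (q * s) = f s) : f t = f 0 := by
  have hiter (n : ℕ) : f (q ^ n * t) = f t := by
    induction n with
    | zero => simp
    | succ n ih =>
      rw [pow_succ', mul_assoc, hfq _ ?_, ih]
      rw [norm_mul, norm_pow]
      exact mul_le_of_le_one_left (norm_nonneg t) (pow_le_one₀ (norm_nonneg q) hq.le)
  have hlim : Tendsto (fun n : ℕ => q ^ n * t) atTop (𝓝 0) := by
    simpa using (tendsto_pow_atTop_nhds_zero_of_norm_lt_one hq).mul_const t
  refine tendsto_nhds_unique ?_ (hf.tendsto.comp hlim)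
  simp [Function.comp_def, hiter]

section PowerSeries

variable {a : ℕ → ℝ} {r t : ℝ}

theorem summable_abs_pow_div_of_abs_le (ha : Summable fun k => r ^ k / |a k|) (ht : |t| ≤ r) :
    Summable fun k => |t ^ k / a k| :=
  ha.of_nonneg_of_le (fun _ => abs_nonneg _) fun k => by
    rw [abs_div, abs_pow]
    gcongr

theorem summable_abs_pow_div_of_abs_lt_one
    (ha : ∀ r, 0 < r → r < 1 → Summable fun k => r ^ k / |a k|) (ht : |t| < 1) :
    Summable fun k => |t ^ k / a k| := by
  obtain ⟨r, htr, hr1⟩ := exists_between ht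
  exact summable_abs_pow_div_of_abs_le (ha r ((abs_nonneg t).trans_lt htr) hr1) htr.le

theorem continuousAt_tsum_pow_div (hr : 0 < r) (ha : Summable fun k => r ^ k / |a k|) :
    ContinuousAt (fun t => ∑' k, t ^ k / a k) 0 := by
  refine (continuousOn_tsum (fun k => by fun_prop) ha fun k t ht => ?_).continuousAt
    (closedBall_mem_nhds 0 hr)
  rw [mem_closedBall, dist_zero_right, Real.norm_eq_abs] at ht
  rw [Real.norm_eq_abs, abs_div, abs_pow]
  gcongr

end PowerSeries

theorem qPoch_zero (q : ℝ) : qPoch q 0 = 1 := Finset.prod_range_zero _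

theorem qPoch_succ (q : ℝ) (k : ℕ) : qPoch q (k + 1) = qPoch q k * (1 - q ^ (k + 1)) :=
  Finset.prod_range_succ _ _

noncomputable def qExpSum (q t : ℝ) : ℝ := ∑' k : ℕ, t ^ k / qPoch q k

noncomputable def qLogSum (q t : ℝ) : ℝ :=
  ∑' k : ℕ, t ^ (k + 1) / (((k : ℝ) + 1) * (1 - q ^ (k + 1)))

theorem qLogSum_eq_mul_tsum (q t : ℝ) :
    qLogSum q t = t * ∑' k : ℕ, t ^ k / (((k : ℝ) + 1) * (1 - q ^ (k + 1))) := by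
  simp only [qLogSum, pow_succ', mul_div_assoc, tsum_mul_left]

theorem qExpSum_zero (q : ℝ) : qExpSum q 0 = 1 := by
  rw [qExpSum, tsum_eq_single 0 fun k hk => by simp [hk], pow_zero, qPoch_zero, div_one]

theorem qLogSum_zero (q : ℝ) : qLogSum q 0 = 0 := by
  simp [qLogSum]

section

variable {q : ℝ}

theorem one_sub_pow_succ_ne_zero (hq : |q| < 1) (k : ℕ) : 1 - q ^ (k + 1) ≠ 0 := by
  refine sub_ne_zero.2 fun h => ?_
  have := pow_lt_one₀ (abs_nonneg q) hq k.succ_ne_zero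
  rw [← abs_pow, ← h, abs_one] at this
  exact this.false

theorem qPoch_ne_zero (hq : |q| < 1) (k : ℕ) : qPoch q k ≠ 0 :=
  Finset.prod_ne_zero_iff.2 fun i _ => one_sub_pow_succ_ne_zero hq i

theorem summable_pow_div_abs_qPoch (hq : |q| < 1) {r : ℝ} (hr0 : 0 < r) (hr1 : r < 1) :
    Summable fun k => r ^ k / |qPoch q k| := by
  refine summable_of_ratio_test_tendsto_lt_one hr1
    (Eventually.of_forall fun k => by have := qPoch_ne_zero hq k; positivity) ?_
  have hpow : Tendsto (fun k : ℕ => q ^ (k + 1)) atTop (𝓝 0) :=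
    (tendsto_pow_atTop_nhds_zero_of_abs_lt_one hq).comp (tendsto_add_atTop_nat 1)
  have hratio : Tendsto (fun k : ℕ => r / |1 - q ^ (k + 1)|) atTop (𝓝 r) := by
    simpa [Pi.div_def] using tendsto_const_nhds (x := r).div (hpow.const_sub 1).abs (by norm_num)
  refine hratio.congr fun k => ?_
  have := qPoch_ne_zero hq k
  rw [qPoch_succ, Real.norm_eq_abs, Real.norm_eq_abs, abs_div, abs_div, abs_abs, abs_abs,
    abs_mul, abs_pow, abs_pow, abs_of_pos hr0]
  field_simp
  ring

theorem one_sub_abs_le_abs_mul_one_sub_pow (hq : |q| < 1) (k : ℕ) :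
    1 - |q| ≤ |((k : ℝ) + 1) * (1 - q ^ (k + 1))| := by
  calc 1 - |q| ≤ 1 - |q| ^ (k + 1) := by
        gcongr
        exact pow_le_of_le_one (abs_nonneg q) hq.le k.succ_ne_zero
    _ ≤ |1 - q ^ (k + 1)| := by
        simpa [abs_pow] using abs_sub_abs_le_abs_sub 1 (q ^ (k + 1))
    _ ≤ |((k : ℝ) + 1) * (1 - q ^ (k + 1))| := by
        rw [abs_mul]
        exact le_mul_of_one_le_left (abs_nonneg _) (by rw [abs_of_pos (by positivity)]; simp)

theorem summable_pow_div_abs_mul_one_sub_pow (hq : |q| < 1) {r : ℝ} (hr0 : 0 ≤ r)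
    (hr1 : r < 1) : Summable fun k : ℕ => r ^ k / |((k : ℝ) + 1) * (1 - q ^ (k + 1))| :=
  ((summable_geometric_of_lt_one hr0 hr1).div_const (1 - |q|)).of_nonneg_of_le
    (fun _ => by positivity) fun k =>
      div_le_div_of_nonneg_left (by positivity) (sub_pos.2 hq)
        (one_sub_abs_le_abs_mul_one_sub_pow hq k)

variable {t : ℝ}

theorem summable_abs_qExpSum (hq : |q| < 1) (ht : |t| < 1) :
    Summable fun k => |t ^ k / qPoch q k| :=
  summable_abs_pow_div_of_abs_lt_one (fun _ hr0 hr1 => summable_pow_div_abs_qPoch hq hr0 hr1) ht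

theorem summable_abs_qLogSum (hq : |q| < 1) (ht : |t| < 1) :
    Summable fun k : ℕ => |t ^ (k + 1) / (((k : ℝ) + 1) * (1 - q ^ (k + 1)))| := by
  refine ((summable_abs_pow_div_of_abs_lt_one (fun _ hr0 hr1 =>
    summable_pow_div_abs_mul_one_sub_pow hq hr0.le hr1) ht).mul_left |t|).congr fun k => ?_
  rw [← abs_mul, mul_div_assoc', ← pow_succ']

theorem continuousAt_qExpSum (hq : |q| < 1) : ContinuousAt (qExpSum q) 0 :=
  continuousAt_tsum_pow_div one_half_pos
    (summable_pow_div_abs_qPoch hq one_half_pos one_half_lt_one)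

theorem continuousAt_qLogSum (hq : |q| < 1) : ContinuousAt (qLogSum q) 0 := by
  rw [funext (qLogSum_eq_mul_tsum q)]
  exact continuousAt_id.mul (continuousAt_tsum_pow_div one_half_pos
    (summable_pow_div_abs_mul_one_sub_pow hq one_half_pos.le one_half_lt_one))

theorem abs_mul_lt_one (hq : |q| < 1) (ht : |t| < 1) : |q * t| < 1 := by
  rw [abs_mul]
  exact mul_lt_one_of_nonneg_of_lt_one_left (abs_nonneg q) hq ht.le

theorem one_sub_mul_qExpSum (hq : |q| < 1) (ht : |t| < 1) :
    (1 - t) * qExpSum q t = qExpSum q (q * t) := by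
  have hF := (summable_abs_qExpSum hq ht).of_abs
  have hFq := (summable_abs_qExpSum hq (abs_mul_lt_one hq ht)).of_abs
  have key : qExpSum q t - qExpSum q (q * t) = t * qExpSum q t := by
    rw [qExpSum, qExpSum, ← hF.tsum_sub hFq, (hF.sub hFq).tsum_eq_zero_add, ← tsum_mul_left,
      pow_zero, pow_zero, sub_self, zero_add]
    congr 1 with k
    have := qPoch_ne_zero hq k
    have := one_sub_pow_succ_ne_zero hq k
    rw [qPoch_succ, mul_pow]
    field_simp
    ring
  linear_combination key

theorem qLogSum_sub_qLogSum_mul (hq : |q| < 1) (ht : |t| < 1) :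
    qLogSum q t - qLogSum q (q * t) = -Real.log (1 - t) := by
  have hS := (summable_abs_qLogSum hq ht).of_abs
  have hSq := (summable_abs_qLogSum hq (abs_mul_lt_one hq ht)).of_abs
  rw [qLogSum, qLogSum, ← hS.tsum_sub hSq, ← (Real.hasSum_pow_div_log_of_abs_lt_one ht).tsum_eq]
  congr 1 with k
  have := one_sub_pow_succ_ne_zero hq k
  rw [mul_pow]
  field_simp

theorem qExpSum_mul_exp_neg_qLogSum_mul (hq : |q| < 1) (ht : |t| < 1) :
    qExpSum q (q * t) * Real.exp (-qLogSum q (q * t)) =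
      qExpSum q t * Real.exp (-qLogSum q t) := by
  have h1 : 0 < 1 - t := sub_pos.2 (abs_lt.1 ht).2
  have hS : qLogSum q (q * t) = qLogSum q t + Real.log (1 - t) := by
    linarith [qLogSum_sub_qLogSum_mul hq ht]
  rw [← one_sub_mul_qExpSum hq ht, hS, neg_add, Real.exp_add, Real.exp_neg (Real.log _),
    Real.exp_log h1]
  field_simp

theorem qExpSum_eq_exp_qLogSum (hq : |q| < 1) (ht : |t| < 1) :
    qExpSum q t = Real.exp (qLogSum q t) := by
  have hinv (s : ℝ) (hs : ‖s‖ ≤ ‖t‖) :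
      qExpSum q (q * s) * Real.exp (-qLogSum q (q * s)) =
        qExpSum q s * Real.exp (-qLogSum q s) :=
    qExpSum_mul_exp_neg_qLogSum_mul hq (by simpa only [Real.norm_eq_abs] using hs.trans_lt ht)
  have hG := apply_eq_apply_zero_of_apply_mul_eq
    (f := fun s => qExpSum q s * Real.exp (-qLogSum q s)) (by rwa [Real.norm_eq_abs])
    ((continuousAt_qExpSum hq).mul (continuousAt_qLogSum hq).neg.rexp) hinv
  rwa [qExpSum_zero, qLogSum_zero, neg_zero, Real.exp_zero, mul_one, Real.exp_neg,
    mul_inv_eq_one₀ (Real.exp_ne_zero _)] at hG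

end

/-- Identity (2.2): for `0 < q < 1` and `(1-q)|x| < 1`, the q-exponential series
`Σ (1-q)^k x^k/(q;q)_k` and the series `Σ_{k≥1} (1-q)^k x^k/(k(1-q^k))` both converge
absolutely, and the first equals the exponential of the second. -/
theorem qExp_eq_exp_of_series (q x : ℝ) (hq0 : 0 < q) (hq1 : q < 1)
    (hx : (1 - q) * |x| < 1) :
    Summable (fun k : ℕ => |(1 - q) ^ k * x ^ k / qPoch q k|) ∧
    Summable (fun k : ℕ =>
      |(1 - q) ^ (k + 1) * x ^ (k + 1) / (((k : ℝ) + 1) * (1 - q ^ (k + 1)))|) ∧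
    ∑' k : ℕ, (1 - q) ^ k * x ^ k / qPoch q k =
      Real.exp (∑' k : ℕ,
        (1 - q) ^ (k + 1) * x ^ (k + 1) / (((k : ℝ) + 1) * (1 - q ^ (k + 1)))) := by
  have hq : |q| < 1 := abs_lt.2 ⟨by linarith, hq1⟩
  have ht : |(1 - q) * x| < 1 := by rwa [abs_mul, abs_of_pos (sub_pos.2 hq1)]
  simp only [← mul_pow]
  exact ⟨summable_abs_qExpSum hq ht, summable_abs_qLogSum hq ht, qExpSum_eq_exp_qLogSum hq ht⟩
end

section
/- Let q ∈ ℝ with q > 0, q ≠ 1, and assume q^j ≠ 1 for 1 ≤ j ≤ n. For all functions f, g : ℝ → ℝ and every real x ≠ 0, the n-th iterated Jackson q-derivative of the product satisfies the q-Leibniz rule (D_q^n (f·g))(x) = Σ_{k=0}^n [n choose k]_q (D_q^k f)(q^{n−k} x) · (D_q^{n−k} g)(x). -/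
/-- The Jackson q-derivative `(D_q f)(x) = (f(qx) − f(x))/((q−1)x)`. -/
noncomputable def jackson (q : ℝ) (f : ℝ → ℝ) : ℝ → ℝ :=
  fun x => (f (q * x) - f x) / ((q - 1) * x)

/-- The q-binomial coefficient
`[n choose m]_q = ((q^n−1)⋯(q^{n−m+1}−1))/((q^m−1)⋯(q−1))`, with `[n choose 0]_q = 1`. -/
noncomputable def qBinom (q : ℝ) (n m : ℕ) : ℝ :=
  ∏ i ∈ Finset.range m, (q ^ (n - i) - 1) / (q ^ (i + 1) - 1)

/-!
The Jackson derivative obeys the twisted product rule `D(uv)(x) = u(qx) Dv(x) + Du(x) v(x)`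
and the dilation rule `D[u(c·)](x) = c Du(cx)`; both hold for every `q` and `x`, also where
the denominator `(q-1)x` vanishes and every Jackson quotient takes the junk value `0`.
Differentiating the `n`-th Leibniz sum term by term with these two rules produces, for each
`k`, the `k`-th summand of the `(n+1)`-st sum plus `q^(n-k)` times its `(k+1)`-st summand,
and the q-Pascal rule `[n+1, k+1]_q = [n, k+1]_q + q^(n-k) [n, k]_q` regroups them.
-/

open Finset

section

variable (q : ℝ)

theorem jackson_sum {ι : Type*} (s : Finset ι) (h : ι → ℝ → ℝ) (x : ℝ) :
    jackson q (fun y => ∑ i ∈ s, h i y) x = ∑ i ∈ s, jackson q (h i) x := by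
  simp only [jackson, ← sum_sub_distrib, sum_div]

theorem jackson_const_mul (c : ℝ) (u : ℝ → ℝ) (x : ℝ) :
    jackson q (fun y => c * u y) x = c * jackson q u x := by
  simp only [jackson]
  ring

theorem jackson_mul (u v : ℝ → ℝ) (x : ℝ) :
    jackson q (fun y => u y * v y) x = u (q * x) * jackson q v x + jackson q u x * v x := by
  simp only [jackson]
  ring

theorem jackson_comp_const_mul (c : ℝ) (u : ℝ → ℝ) (x : ℝ) :
    jackson q (fun y => u (c * y)) x = c * jackson q u (c * x) := by
  rcases eq_or_ne c 0 with rfl | hc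
  · simp [jackson]
  rcases eq_or_ne x 0 with rfl | hx
  · simp [jackson]
  simp only [jackson, mul_left_comm c q]
  field_simp

theorem qBinom_zero_right (n : ℕ) : qBinom q n 0 = 1 := by simp [qBinom]

theorem qBinom_succ_self (n : ℕ) : qBinom q n (n + 1) = 0 :=
  prod_eq_zero (self_mem_range_succ n) (by simp)

theorem qBinom_eq_div (n m : ℕ) :
    qBinom q n m = (∏ i ∈ range m, (q ^ (n - i) - 1)) / ∏ i ∈ range m, (q ^ (i + 1) - 1) :=
  prod_div_distrib _ _

theorem qBinom_succ_succ {n k : ℕ} (hk : k ≤ n)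
    (hq : ∀ j : ℕ, 1 ≤ j → j ≤ k + 1 → q ^ j ≠ 1) :
    qBinom q (n + 1) (k + 1) = qBinom q n (k + 1) + q ^ (n - k) * qBinom q n k := by
  have hden : ∏ i ∈ range k, (q ^ (i + 1) - 1) ≠ 0 :=
    prod_ne_zero_iff.mpr fun i hi =>
      sub_ne_zero.mpr (hq _ (by omega) (by simp only [mem_range] at hi; omega))
  have hlast : q ^ (k + 1) - 1 ≠ 0 := sub_ne_zero.mpr (hq _ (by omega) le_rfl)
  have hsplit : q ^ (n + 1) - 1 = (q ^ (n - k) - 1) + q ^ (n - k) * (q ^ (k + 1) - 1) := by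
    rw [mul_sub, ← pow_add, show n - k + (k + 1) = n + 1 by omega]
    ring
  rw [qBinom_eq_div, qBinom_eq_div, qBinom_eq_div, prod_range_succ', prod_range_succ,
    prod_range_succ]
  simp only [Nat.add_sub_add_right, Nat.sub_zero, hsplit]
  field_simp

theorem sum_range_qBinom_succ_mul (n : ℕ)
    (hq : ∀ j : ℕ, 1 ≤ j → j ≤ n + 1 → q ^ j ≠ 1) (T : ℕ → ℝ) :
    ∑ k ∈ range (n + 2), qBinom q (n + 1) k * T k =
      ∑ k ∈ range (n + 1), qBinom q n k * (T k + q ^ (n - k) * T (k + 1)) := by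
  have hpascal : ∀ k ∈ range (n + 1), qBinom q (n + 1) (k + 1) * T (k + 1) =
      qBinom q n (k + 1) * T (k + 1) + qBinom q n k * (q ^ (n - k) * T (k + 1)) := by
    intro k hk
    rw [qBinom_succ_succ q (by simpa [Nat.lt_succ_iff] using hk)
      fun j hj hjk => hq j hj (by simp only [mem_range] at hk; omega)]
    ring
  have hshift : ∑ k ∈ range (n + 1), qBinom q n k * T k =
      ∑ k ∈ range (n + 1), qBinom q n (k + 1) * T (k + 1) + T 0 := by
    rw [← add_zero (∑ k ∈ range (n + 1), qBinom q n k * T k), ← zero_mul (T (n + 1)),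
      ← qBinom_succ_self q n, ← sum_range_succ, sum_range_succ', qBinom_zero_right, one_mul]
  rw [sum_range_succ', sum_congr rfl hpascal, sum_add_distrib, qBinom_zero_right, one_mul]
  simp only [mul_add, sum_add_distrib, hshift]
  ring

theorem jackson_leibniz_summand (c : ℝ) (k m : ℕ) (f g : ℝ → ℝ) (x : ℝ) :
    jackson q (fun y => c * (jackson q)^[k] f (q ^ m * y) * (jackson q)^[m] g y) x =
      c * ((jackson q)^[k] f (q ^ (m + 1) * x) * (jackson q)^[m + 1] g x +
        q ^ m * ((jackson q)^[k + 1] f (q ^ m * x) * (jackson q)^[m] g x)) := by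
  rw [jackson_mul, jackson_const_mul, jackson_comp_const_mul, Function.iterate_succ_apply',
    Function.iterate_succ_apply', ← mul_assoc, ← pow_succ]
  ring

end

theorem jackson_iter_leibniz_general (q : ℝ) (n : ℕ)
    (hqn : ∀ j : ℕ, 1 ≤ j → j ≤ n → q ^ j ≠ 1) (f g : ℝ → ℝ) (x : ℝ) :
    (jackson q)^[n] (fun y => f y * g y) x =
      ∑ k ∈ Finset.range (n + 1),
        qBinom q n k * (jackson q)^[k] f (q ^ (n - k) * x) * (jackson q)^[n - k] g x := by
  induction n generalizing x with
  | zero => simp [qBinom_zero_right]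
  | succ n ih =>
    have ih := funext (ih fun j hj hjn => hqn j hj (by omega))
    simp only [mul_assoc (qBinom q (n + 1) _)]
    rw [Function.iterate_succ_apply', ih, jackson_sum, sum_range_qBinom_succ_mul q n hqn]
    refine sum_congr rfl fun k hk => ?_
    have hkn : n + 1 - k = n - k + 1 := by simp only [mem_range] at hk; omega
    rw [jackson_leibniz_summand, hkn, Nat.add_sub_add_right]

/-- The q-Leibniz rule for the n-th iterated Jackson q-derivative of a product:
`(D_q^n (f·g))(x) = Σ_{k=0}^n [n choose k]_q (D_q^k f)(q^{n−k} x)·(D_q^{n−k} g)(x)`. -/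
theorem jackson_iter_leibniz (q : ℝ) (n : ℕ) (hq0 : 0 < q) (hq1 : q ≠ 1)
    (hqn : ∀ j : ℕ, 1 ≤ j → j ≤ n → q ^ j ≠ 1) (f g : ℝ → ℝ) (x : ℝ) (hx : x ≠ 0) :
    (jackson q)^[n] (fun y => f y * g y) x =
      ∑ k ∈ Finset.range (n + 1),
        qBinom q n k * (jackson q)^[k] f (q ^ (n - k) * x) * (jackson q)^[n - k] g x :=
  jackson_iter_leibniz_general q n hqn f g x
end

section
/- Let q ∈ ℝ with q > 0, q ≠ 1, and let m ≥ 1. For every function f : ℝ → ℝ and every real x ≠ 0, the composition of the operators (D − q^j) for j = 0, 1, …, m−1 satisfies ((D−1)(D−q)⋯(D−q^{m−1}) f)(x) = (q−1)^m q^{m(m−1)/2} x^m (D_q^m f)(x), where (D − c)f denotes the function x ↦ f(qx) − c·f(x). -/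
/-- The operator `(D − c)f : x ↦ f(qx) − c·f(x)`. -/
def shiftedScale (q c : ℝ) (f : ℝ → ℝ) : ℝ → ℝ := fun x => f (q * x) - c * f x

/-- The composition `(D−1)(D−q)⋯(D−q^{m−1})` applied to `f` (the factor `D−q^{m−1}`
acts first). -/
def ciglerProd (q : ℝ) : ℕ → (ℝ → ℝ) → (ℝ → ℝ)
  | 0, f => f
  | m + 1, f => ciglerProd q m (shiftedScale q (q ^ m) f)

lemma jackson_congr (q : ℝ) (hq : q ≠ 0) (m : ℕ) :
    ∀ g h : ℝ → ℝ, (∀ y : ℝ, y ≠ 0 → g y = h y) → ∀ x : ℝ, x ≠ 0 →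
      (jackson q)^[m] g x = (jackson q)^[m] h x := by
  induction m with
  | zero => intro g h hgh x hx; exact hgh x hx
  | succ m ih =>
    intro g h hgh x hx
    rw [Function.iterate_succ_apply, Function.iterate_succ_apply]
    refine ih _ _ ?_ x hx
    intro y hy
    simp only [jackson, hgh y hy, hgh (q * y) (mul_ne_zero hq hy)]

lemma jackson_smul (q c : ℝ) (m : ℕ) (g : ℝ → ℝ) (x : ℝ) :
    (jackson q)^[m] (fun y => c * g y) x = c * (jackson q)^[m] g x := by
  induction m generalizing g x with
  | zero => rfl
  | succ m ih =>
    rw [Function.iterate_succ_apply, Function.iterate_succ_apply]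
    have : jackson q (fun y => c * g y) = fun y => c * jackson q g y := by
      funext y
      simp only [jackson]
      ring
    rw [this, ih]

lemma key_step (q : ℝ) (hq0 : q ≠ 0) (hq1 : q ≠ 1) (m : ℕ) (f : ℝ → ℝ) (y : ℝ) (hy : y ≠ 0) :
    jackson q (shiftedScale q (q ^ (m + 1)) f) y
      = q * shiftedScale q (q ^ m) (jackson q f) y := by
  have hq1' : q - 1 ≠ 0 := sub_ne_zero.mpr hq1
  simp only [jackson, shiftedScale]
  field_simp
  ring

lemma jackson_shiftedScale (q : ℝ) (hq0 : q ≠ 0) (hq1 : q ≠ 1) (m : ℕ) :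
    ∀ f : ℝ → ℝ, ∀ x : ℝ, x ≠ 0 →
      (jackson q)^[m] (shiftedScale q (q ^ m) f) x
        = (q - 1) * q ^ m * x * (jackson q)^[m + 1] f x := by
  have hq1' : q - 1 ≠ 0 := sub_ne_zero.mpr hq1
  induction m with
  | zero =>
    intro f x hx
    simp only [zero_add, Function.iterate_one, shiftedScale, jackson, pow_zero, one_mul]
    field_simp
    simp [shiftedScale]
  | succ m ih =>
    intro f x hx
    rw [Function.iterate_succ_apply]
    have h1 : (jackson q)^[m] (jackson q (shiftedScale q (q ^ (m + 1)) f)) x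
        = (jackson q)^[m] (fun y => q * shiftedScale q (q ^ m) (jackson q f) y) x := by
      refine jackson_congr q hq0 m _ _ ?_ x hx
      intro y hy
      exact key_step q hq0 hq1 m f y hy
    rw [h1, jackson_smul, ih (jackson q f) x hx]
    have h2 : (jackson q)^[m + 1 + 1] f x = (jackson q)^[m + 1] (jackson q f) x :=
      congrFun (Function.iterate_succ_apply (jackson q) (m + 1) f) x
    rw [h2]
    ring

/-- Cigler's key lemma: `((D−1)(D−q)⋯(D−q^{m−1}) f)(x) = (q−1)^m q^{m(m−1)/2} x^m (D_q^m f)(x)`. -/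
theorem cigler_key_lemma (q : ℝ) (m : ℕ) (hq0 : 0 < q) (hq1 : q ≠ 1) (hm : 1 ≤ m)
    (f : ℝ → ℝ) (x : ℝ) (hx : x ≠ 0) :
    ciglerProd q m f x =
      (q - 1) ^ m * q ^ (m * (m - 1) / 2) * x ^ m * (jackson q)^[m] f x := by
  clear hm
  have hq0' : q ≠ 0 := ne_of_gt hq0
  induction m generalizing f with
  | zero => simp [ciglerProd]
  | succ m ih =>
    have hexp : (m + 1) * (m + 1 - 1) / 2 = m * (m - 1) / 2 + m := by
      have h1 : (m + 1) * (m + 1 - 1) / 2 = (m + 1).choose 2 := (Nat.choose_two_right _).symm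
      have h2 : m * (m - 1) / 2 = m.choose 2 := (Nat.choose_two_right _).symm
      rw [h1, h2]
      simp [Nat.choose_succ_succ, Nat.choose_one_right]
      omega
    show ciglerProd q m (shiftedScale q (q ^ m) f) x = _
    rw [ih (shiftedScale q (q ^ m) f),
      jackson_congr q hq0' m (shiftedScale q (q ^ m) f) (shiftedScale q (q ^ m) f) (fun _ _ => rfl) x hx,
      jackson_shiftedScale q hq0' hq1 m f x hx, hexp, pow_add]
    ring
end

section
/- Let N ≥ n ≥ 0 and let τ : ℝ^N → ℝ be a C^∞ function. Then for every t ∈ ℝ^N, Σ_{j=0}^n (p_j(−∂̃)τ)(t) · (p_{n−j}(∂̃)τ)(t) = (p_n(∂̃) τ·τ)(t), where p_j(±∂̃) is the constant-coefficient differential operator obtained from the Schur polynomial p_j by substituting y_k ↦ ±(1/k)∂/∂t_k, and (p_n(∂̃)τ·τ)(t) denotes the Hirota bilinear action, namely the result of applying the operator obtained from p_n by substituting y_k ↦ (1/k)∂/∂s_k to the function s ↦ τ(t+s)τ(t−s) and evaluating at s = 0. -/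
/-- The elementary Schur polynomials `p_n` in variables `X 1, X 2, …`, defined by the
generating function `Σ p_n z^n = exp(Σ_{k≥1} X_k z^k)`, via the equivalent recursion
`(n+1) p_{n+1} = Σ_{k=0}^{n} (k+1) X_{k+1} p_{n−k}`, with `p_0 = 1`. -/
noncomputable def schurPoly : ℕ → MvPolynomial ℕ ℝ
  | 0 => 1
  | n + 1 =>
      MvPolynomial.C (((n : ℝ) + 1)⁻¹) *
        ∑ k ∈ Finset.range (n + 1),
          MvPolynomial.C ((k : ℝ) + 1) * MvPolynomial.X (k + 1) * schurPoly (n - k)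
decreasing_by exact Nat.lt_succ_of_le (Nat.sub_le n k)

/-- The operator `ε·(1/k)·∂/∂t_k` on functions of `t ∈ ℝ^N` (variables are 1-based;
out-of-range indices act as the zero operator). -/
noncomputable def pderivOp (N : ℕ) (ε : ℝ) (k : ℕ) (f : (Fin N → ℝ) → ℝ) :
    (Fin N → ℝ) → ℝ :=
  fun t =>
    if h : 1 ≤ k ∧ k - 1 < N then
      ε * (1 / (k : ℝ)) * fderiv ℝ f t (Pi.single (⟨k - 1, h.2⟩ : Fin N) 1)
    else 0

/-- The constant-coefficient differential operator attached to a monomial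
`d = ∏ X_k^{d_k}`: the composition over `k = 1, …, K` of `(ε·(1/k)·∂_k)^{d_k}`. -/
noncomputable def monoOp (N : ℕ) (ε : ℝ) (d : ℕ →₀ ℕ) :
    ℕ → ((Fin N → ℝ) → ℝ) → ((Fin N → ℝ) → ℝ)
  | 0 => id
  | k + 1 => fun f => (pderivOp N ε (k + 1))^[d (k + 1)] (monoOp N ε d k f)

/-- The constant-coefficient differential operator `P(ε·∂̃)` obtained from a polynomial
`P` in the variables `X 1, X 2, …` by substituting `X_k ↦ ε·(1/k)·∂/∂t_k`. -/
noncomputable def polyOp (N : ℕ) (ε : ℝ) (P : MvPolynomial ℕ ℝ)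
    (f : (Fin N → ℝ) → ℝ) : (Fin N → ℝ) → ℝ :=
  fun t => ∑ d ∈ P.support, P.coeff d * monoOp N ε d (d.support.sup id) f t


section Lemmas


variable {N : ℕ} {ε ε' : ℝ} {k j : ℕ} {f g : (Fin N → ℝ) → ℝ}

lemma pderivOp_of_not (h : ¬(1 ≤ k ∧ k - 1 < N)) (ε : ℝ) (f : (Fin N → ℝ) → ℝ) :
    pderivOp N ε k f = fun _ => 0 := by
  funext t; simp only [pderivOp, dif_neg h]

lemma pderivOp_apply (h : 1 ≤ k ∧ k - 1 < N) (ε : ℝ) (f : (Fin N → ℝ) → ℝ)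
    (t : Fin N → ℝ) :
    pderivOp N ε k f t
      = ε * (1 / (k : ℝ)) * fderiv ℝ f t (Pi.single (⟨k - 1, h.2⟩ : Fin N) 1) := by
  simp only [pderivOp, dif_pos h]

lemma pderivOp_contDiff (hf : ContDiff ℝ (⊤:ℕ∞) f) :
    ContDiff ℝ (⊤:ℕ∞) (pderivOp N ε k f) := by
  by_cases h : 1 ≤ k ∧ k - 1 < N
  · rw [show pderivOp N ε k f = fun t =>
        ε * (1 / (k : ℝ)) * fderiv ℝ f t (Pi.single (⟨k - 1, h.2⟩ : Fin N) 1) from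
      funext fun t => pderivOp_apply h ε f t]
    exact contDiff_const.mul
      ((hf.fderiv_right (m := (⊤:ℕ∞)) (by exact_mod_cast le_top)).clm_apply contDiff_const)
  · rw [pderivOp_of_not h]; exact contDiff_const

lemma pderivOp_congr (h : f = g) : pderivOp N ε k f = pderivOp N ε k g := by rw [h]

lemma pderivOp_sum {ι : Type*} (S : Finset ι) (F : ι → (Fin N → ℝ) → ℝ)
    (hF : ∀ i ∈ S, Differentiable ℝ (F i)) :
    pderivOp N ε k (fun t => ∑ i ∈ S, F i t) = fun t => ∑ i ∈ S, pderivOp N ε k (F i) t := by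
  funext t
  by_cases h : 1 ≤ k ∧ k - 1 < N
  · simp only [pderivOp, dif_pos h]
    rw [fderiv_fun_sum (fun i hi => (hF i hi).differentiableAt)]
    simp [Finset.mul_sum, ContinuousLinearMap.sum_apply]
  · simp [pderivOp, dif_neg h]

lemma pderivOp_const_mul (c : ℝ) (hf : Differentiable ℝ f) :
    pderivOp N ε k (fun t => c * f t) = fun t => c * pderivOp N ε k f t := by
  funext t
  by_cases h : 1 ≤ k ∧ k - 1 < N
  · simp only [pderivOp, dif_pos h]
    rw [fderiv_const_mul (hf.differentiableAt) c]
    simp; ring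
  · simp [pderivOp, dif_neg h]

lemma fderiv2_symm (hf : ContDiff ℝ (⊤:ℕ∞) f) (t : Fin N → ℝ) (v w : Fin N → ℝ) :
    fderiv ℝ (fun x => fderiv ℝ f x v) t w = fderiv ℝ (fun x => fderiv ℝ f x w) t v := by
  have hdf : Differentiable ℝ (fderiv ℝ f) :=
    (hf.fderiv_right (m := (⊤:ℕ∞)) (by exact_mod_cast le_top)).differentiable (by simp)
  have key : ∀ u z : Fin N → ℝ,
      fderiv ℝ (fun x => fderiv ℝ f x u) t z = fderiv ℝ (fderiv ℝ f) t z u := by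
    intro u z
    have h1 : fderiv ℝ (fun x => fderiv ℝ f x u) t
        = (fderiv ℝ (fderiv ℝ f) t).flip u := by
      have := fderiv_clm_apply (c := fderiv ℝ f) (u := fun _ => u) (x := t)
        (hdf.differentiableAt) (differentiableAt_const u)
      simpa using this
    rw [h1]; rfl
  rw [key v w, key w v]
  exact second_derivative_symmetric (f := f) (fun y => (hf.differentiable (by simp) y).hasFDerivAt)
    (hdf t).hasFDerivAt w v

lemma pderivOp_comm (hf : ContDiff ℝ (⊤:ℕ∞) f) :
    pderivOp N ε j (pderivOp N ε' k f) = pderivOp N ε' k (pderivOp N ε j f) := by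
  by_cases hj : 1 ≤ j ∧ j - 1 < N
  · by_cases hk : 1 ≤ k ∧ k - 1 < N
    · funext t
      rw [pderivOp_apply hj, pderivOp_apply hk]
      have h1 : pderivOp N ε' k f = fun x => ε' * (1/(k:ℝ)) *
          fderiv ℝ f x (Pi.single (⟨k - 1, hk.2⟩ : Fin N) 1) := by
        funext x; rw [pderivOp_apply hk]
      have h2 : pderivOp N ε j f = fun x => ε * (1/(j:ℝ)) *
          fderiv ℝ f x (Pi.single (⟨j - 1, hj.2⟩ : Fin N) 1) := by
        funext x; rw [pderivOp_apply hj]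
      rw [h1, h2]
      have hdv : ∀ v : Fin N → ℝ, Differentiable ℝ (fun x => fderiv ℝ f x v) := by
        intro v
        exact fun x => (((ContinuousLinearMap.apply ℝ ℝ v).differentiable).comp
          ((hf.fderiv_right (m := (⊤:ℕ∞)) (by exact_mod_cast le_top)).differentiable (by simp))) x
      rw [fderiv_const_mul (hdv _ _) (ε' * (1/(k:ℝ))),
        fderiv_const_mul (hdv _ _) (ε * (1/(j:ℝ)))]
      simp only [ContinuousLinearMap.coe_smul', Pi.smul_apply, smul_eq_mul]
      rw [fderiv2_symm hf]
      ring
    · rw [pderivOp_of_not hk, pderivOp_of_not hk]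
      rw [show (pderivOp N ε j (fun _ => (0:ℝ))) = fun _ => 0 by
        funext t
        by_cases h : 1 ≤ j ∧ j - 1 < N
        · rw [pderivOp_apply h]; simp
        · rw [pderivOp_of_not h]]
  · rw [pderivOp_of_not hj, pderivOp_of_not hj]
    rw [show (pderivOp N ε' k (fun _ => (0:ℝ))) = fun _ => 0 by
      funext t
      by_cases h : 1 ≤ k ∧ k - 1 < N
      · rw [pderivOp_apply h]; simp
      · rw [pderivOp_of_not h]]


variable {d d' : ℕ →₀ ℕ} {K K' : ℕ}

lemma monoOp_succ (d : ℕ →₀ ℕ) (K : ℕ) (f : (Fin N → ℝ) → ℝ) :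
    monoOp N ε d (K + 1) f = (pderivOp N ε (K + 1))^[d (K + 1)] (monoOp N ε d K f) := rfl

lemma pderivOp_iterate_contDiff (m : ℕ) (hf : ContDiff ℝ (⊤:ℕ∞) f) :
    ContDiff ℝ (⊤:ℕ∞) ((pderivOp N ε k)^[m] f) := by
  induction m with
  | zero => exact hf
  | succ m ih => rw [Function.iterate_succ_apply']; exact pderivOp_contDiff ih

lemma monoOp_contDiff (hf : ContDiff ℝ (⊤:ℕ∞) f) :
    ContDiff ℝ (⊤:ℕ∞) (monoOp N ε d K f) := by
  induction K with
  | zero => exact hf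
  | succ K ih => exact pderivOp_iterate_contDiff _ ih

lemma monoOp_congr (h : ∀ i, 1 ≤ i → i ≤ K → d i = d' i) (f : (Fin N → ℝ) → ℝ) :
    monoOp N ε d K f = monoOp N ε d' K f := by
  induction K with
  | zero => rfl
  | succ K ih =>
    show (pderivOp N ε (K + 1))^[d (K + 1)] (monoOp N ε d K f)
      = (pderivOp N ε (K + 1))^[d' (K + 1)] (monoOp N ε d' K f)
    rw [h (K + 1) (by omega) le_rfl, ih (fun i h1 h2 => h i h1 (by omega))]

lemma monoOp_of_le (h1 : d.support.sup id ≤ K') (h2 : K' ≤ K) (f : (Fin N → ℝ) → ℝ) :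
    monoOp N ε d K f = monoOp N ε d K' f := by
  induction K with
  | zero => rw [Nat.le_zero.mp h2]
  | succ K ih =>
    rcases Nat.eq_or_lt_of_le h2 with h | h
    · rw [h]
    · have hK : K' ≤ K := by omega
      have hd : d (K + 1) = 0 := by
        by_contra hne
        have : K + 1 ∈ d.support := Finsupp.mem_support_iff.2 hne
        have : K + 1 ≤ d.support.sup id := Finset.le_sup (f := id) this
        omega
      show (pderivOp N ε (K + 1))^[d (K + 1)] (monoOp N ε d K f) = _
      rw [hd]
      exact ih hK

lemma pderivOp_iterate_comm (m : ℕ) (hf : ContDiff ℝ (⊤:ℕ∞) f) :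
    pderivOp N ε j ((pderivOp N ε k)^[m] f) = (pderivOp N ε k)^[m] (pderivOp N ε j f) := by
  induction m with
  | zero => rfl
  | succ m ih =>
    rw [Function.iterate_succ_apply', Function.iterate_succ_apply',
      pderivOp_comm (pderivOp_iterate_contDiff m hf), ih]

lemma monoOp_add_single (hk : 1 ≤ k) (hf : ContDiff ℝ (⊤:ℕ∞) f) :
    ∀ K, k ≤ K → monoOp N ε (Finsupp.single k 1 + d) K f = pderivOp N ε k (monoOp N ε d K f) := by
  intro K
  induction K with
  | zero => omega
  | succ K ih =>
    intro hkK
    rw [monoOp_succ, monoOp_succ]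
    by_cases hke : k = K + 1
    · have hagree : monoOp N ε (Finsupp.single k 1 + d) K f = monoOp N ε d K f :=
        monoOp_congr (fun i h1 h2 => by
          simp [Finsupp.add_apply, Finsupp.single_apply, show ¬ k = i by omega]) f
      have hval : ((Finsupp.single k 1 + d : ℕ →₀ ℕ)) (K + 1) = d (K + 1) + 1 := by
        rw [Finsupp.add_apply, Finsupp.single_apply, if_pos hke, Nat.add_comm]
      rw [hval, hagree, Function.iterate_succ_apply', hke]
    · have hkK' : k ≤ K := by omega
      have he : ((Finsupp.single k 1 + d : ℕ →₀ ℕ)) (K + 1) = d (K + 1) := by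
        rw [Finsupp.add_apply, Finsupp.single_apply, if_neg hke, Nat.zero_add]
      rw [he, ih hkK', pderivOp_iterate_comm _ (monoOp_contDiff hf)]


open MvPolynomial in
lemma polyOp_superset {P : MvPolynomial ℕ ℝ} {S : Finset (ℕ →₀ ℕ)} (hS : P.support ⊆ S)
    (f : (Fin N → ℝ) → ℝ) (t : Fin N → ℝ) :
    polyOp N ε P f t = ∑ d ∈ S, P.coeff d * monoOp N ε d (d.support.sup id) f t :=
  Finset.sum_subset hS (fun d _ hd => by
    rw [MvPolynomial.notMem_support_iff.mp hd, zero_mul])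

lemma polyOp_contDiff {P : MvPolynomial ℕ ℝ} (hf : ContDiff ℝ (⊤:ℕ∞) f) :
    ContDiff ℝ (⊤:ℕ∞) (polyOp N ε P f) :=
  ContDiff.sum fun d _ => contDiff_const.mul (monoOp_contDiff hf)

lemma polyOp_add (P Q : MvPolynomial ℕ ℝ) (f : (Fin N → ℝ) → ℝ) (t : Fin N → ℝ) :
    polyOp N ε (P + Q) f t = polyOp N ε P f t + polyOp N ε Q f t := by
  rw [polyOp_superset (S := P.support ∪ Q.support)
      (MvPolynomial.support_add),
    polyOp_superset (S := P.support ∪ Q.support) (Finset.subset_union_left),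
    polyOp_superset (S := P.support ∪ Q.support) (Finset.subset_union_right),
    ← Finset.sum_add_distrib]
  exact Finset.sum_congr rfl fun d _ => by rw [MvPolynomial.coeff_add, add_mul]

lemma polyOp_zero (f : (Fin N → ℝ) → ℝ) (t : Fin N → ℝ) : polyOp N ε 0 f t = 0 := by
  simp [polyOp]

lemma polyOp_sum {ι : Type*} (S : Finset ι) (P : ι → MvPolynomial ℕ ℝ)
    (f : (Fin N → ℝ) → ℝ) (t : Fin N → ℝ) :
    polyOp N ε (∑ i ∈ S, P i) f t = ∑ i ∈ S, polyOp N ε (P i) f t := by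
  classical
  induction S using Finset.induction_on with
  | empty => simp [polyOp_zero]
  | insert _ _ hnot ih =>
    rw [Finset.sum_insert hnot, Finset.sum_insert hnot, polyOp_add, ih]

lemma polyOp_C_mul (c : ℝ) (P : MvPolynomial ℕ ℝ) (f : (Fin N → ℝ) → ℝ) (t : Fin N → ℝ) :
    polyOp N ε (MvPolynomial.C c * P) f t = c * polyOp N ε P f t := by
  rw [← MvPolynomial.smul_eq_C_mul,
    polyOp_superset (S := P.support) (MvPolynomial.support_smul), polyOp, Finset.mul_sum]
  exact Finset.sum_congr rfl fun d _ => by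
    rw [MvPolynomial.coeff_smul, smul_eq_mul, mul_assoc]

lemma polyOp_monomial (d : ℕ →₀ ℕ) (c : ℝ) (f : (Fin N → ℝ) → ℝ) (t : Fin N → ℝ) :
    polyOp N ε (MvPolynomial.monomial d c) f t = c * monoOp N ε d (d.support.sup id) f t := by
  rw [polyOp_superset (S := {d}) (MvPolynomial.support_monomial_subset), Finset.sum_singleton,
    MvPolynomial.coeff_monomial, if_pos rfl]

lemma polyOp_one (f : (Fin N → ℝ) → ℝ) (t : Fin N → ℝ) : polyOp N ε 1 f t = f t := by
  have h1 : (1 : MvPolynomial ℕ ℝ) = MvPolynomial.monomial 0 1 := by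
    rw [MvPolynomial.monomial_zero']; simp
  rw [h1, polyOp_monomial, one_mul]
  have : (0 : ℕ →₀ ℕ).support.sup id = 0 := by simp
  rw [this]
  rfl

open MvPolynomial in
lemma polyOp_X_mul (hk : 1 ≤ k) (hf : ContDiff ℝ (⊤:ℕ∞) f) (P : MvPolynomial ℕ ℝ)
    (t : Fin N → ℝ) :
    polyOp N ε (X k * P) f t = pderivOp N ε k (polyOp N ε P f) t := by
  have hXP : X k * P = ∑ d ∈ P.support, monomial (Finsupp.single k 1 + d) (P.coeff d) := by
    conv_lhs => rw [P.as_sum, Finset.mul_sum]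
    exact Finset.sum_congr rfl fun d hd => by
      rw [X, monomial_mul, one_mul]
  rw [hXP, polyOp_sum]
  have hpoly : polyOp N ε P f
      = fun u => ∑ d ∈ P.support, P.coeff d * monoOp N ε d (d.support.sup id) f u := rfl
  rw [hpoly, pderivOp_sum _ _ (fun d _ =>
    (contDiff_const.mul (monoOp_contDiff hf)).differentiable (by simp))]
  refine Finset.sum_congr rfl fun d hd => ?_
  rw [polyOp_monomial,
    pderivOp_const_mul _ ((monoOp_contDiff hf).differentiable (by simp))]
  congr 1
  set K := max k (d.support.sup id) with hK
  have hsupe : (Finsupp.single k 1 + d : ℕ →₀ ℕ).support.sup id ≤ K := by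
    refine le_trans (Finset.sup_mono (Finsupp.support_add)) ?_
    rw [Finset.sup_union]
    refine sup_le_sup ?_ le_rfl
    rw [Finsupp.support_single_ne_zero k one_ne_zero, Finset.sup_singleton]
    exact le_rfl
  rw [← monoOp_of_le le_rfl hsupe f, monoOp_add_single hk hf K (le_max_left _ _),
    monoOp_of_le le_rfl (le_max_right k (d.support.sup id)) f]

lemma pderiv_hirota {A B : (Fin N → ℝ) → ℝ} (hA : ContDiff ℝ (⊤:ℕ∞) A)
    (hB : ContDiff ℝ (⊤:ℕ∞) B) (t : Fin N → ℝ) (k : ℕ) :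
    pderivOp N 1 k (fun s => A (t - s) * B (t + s))
      = fun s => pderivOp N (-1) k A (t - s) * B (t + s)
          + A (t - s) * pderivOp N 1 k B (t + s) := by
  funext s
  by_cases h : 1 ≤ k ∧ k - 1 < N
  · have hAd : HasFDerivAt (fun s : Fin N → ℝ => A (t - s))
        ((fderiv ℝ A (t - s)).comp (-(ContinuousLinearMap.id ℝ (Fin N → ℝ)))) s := by
      have := (((hA.differentiable (by simp)) (t - s)).hasFDerivAt).comp s
        ((hasFDerivAt_id s).const_sub t)
      exact this
    have hBd : HasFDerivAt (fun s : Fin N → ℝ => B (t + s))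
        ((fderiv ℝ B (t + s)).comp (ContinuousLinearMap.id ℝ (Fin N → ℝ))) s := by
      have := (((hB.differentiable (by simp)) (t + s)).hasFDerivAt).comp s
        ((hasFDerivAt_id s).const_add t)
      exact this
    have hprod := hAd.mul hBd
    rw [pderivOp_apply h, pderivOp_apply h, pderivOp_apply h, show (fun s => A (t - s) * B (t + s)) = (fun s => A (t - s)) * (fun s => B (t + s)) from rfl, hprod.fderiv]
    simp only [ContinuousLinearMap.add_apply, ContinuousLinearMap.smul_apply,
      ContinuousLinearMap.comp_apply, ContinuousLinearMap.neg_apply,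
      ContinuousLinearMap.id_apply, ContinuousLinearMap.coe_comp', Function.comp_apply,
      map_neg, smul_eq_mul]
    ring
  · rw [pderivOp_of_not h, pderivOp_of_not h, pderivOp_of_not h]
    simp


lemma schurPoly_succ (n : ℕ) :
    schurPoly (n + 1) = MvPolynomial.C (((n : ℝ) + 1)⁻¹) *
        ∑ k ∈ Finset.range (n + 1),
          MvPolynomial.C ((k : ℝ) + 1) * MvPolynomial.X (k + 1) * schurPoly (n - k) := by
  rw [schurPoly]

lemma polyOp_schur_succ (hf : ContDiff ℝ (⊤:ℕ∞) f) (n : ℕ) (u : Fin N → ℝ) :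
    ((n : ℝ) + 1) * polyOp N ε (schurPoly (n + 1)) f u
      = ∑ k ∈ Finset.range (n + 1),
          ((k : ℝ) + 1) * pderivOp N ε (k + 1) (polyOp N ε (schurPoly (n - k)) f) u := by
  rw [schurPoly_succ, polyOp_C_mul, polyOp_sum, ← mul_assoc,
    mul_inv_cancel₀ (by positivity : ((n : ℝ) + 1) ≠ 0), one_mul]
  refine Finset.sum_congr rfl fun k _ => ?_
  rw [mul_assoc, polyOp_C_mul, polyOp_X_mul (Nat.le_add_left 1 k) hf]

lemma polyOp_schur_weighted (hf : ContDiff ℝ (⊤:ℕ∞) f) (m : ℕ) (u : Fin N → ℝ) :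
    (m : ℝ) * polyOp N ε (schurPoly m) f u
      = ∑ k ∈ Finset.range m,
          ((k : ℝ) + 1) * pderivOp N ε (k + 1) (polyOp N ε (schurPoly (m - 1 - k)) f) u := by
  match m with
  | 0 => simp
  | n + 1 =>
    have := polyOp_schur_succ (N := N) (ε := ε) hf n u
    push_cast at this ⊢
    rw [this]

lemma tri_reindex (f : ℕ → ℕ → ℝ) (n : ℕ) :
    ∑ m ∈ Finset.range (n + 1), ∑ k ∈ Finset.range (m + 1), f k (m - k)
      = ∑ k ∈ Finset.range (n + 1), ∑ i ∈ Finset.range (n + 1 - k), f k i := by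
  induction n with
  | zero => simp
  | succ n ih =>
    rw [Finset.sum_range_succ, ih]
    have hsplit : ∀ k ∈ Finset.range (n + 2),
        ∑ i ∈ Finset.range (n + 2 - k), f k i
          = (∑ i ∈ Finset.range (n + 1 - k), f k i) + (if k ≤ n + 1 then f k (n + 1 - k) else 0) := by
      intro k hk
      have hk' : k ≤ n + 1 := by simpa [Nat.lt_succ_iff] using hk
      rw [if_pos hk', show n + 2 - k = (n + 1 - k) + 1 by omega, Finset.sum_range_succ]
    rw [Finset.sum_congr rfl hsplit, Finset.sum_add_distrib]
    have h1 : ∑ k ∈ Finset.range (n + 2), ∑ i ∈ Finset.range (n + 1 - k), f k i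
        = ∑ k ∈ Finset.range (n + 1), ∑ i ∈ Finset.range (n + 1 - k), f k i := by
      rw [Finset.sum_range_succ]
      simp
    have h2 : ∑ k ∈ Finset.range (n + 2), (if k ≤ n + 1 then f k (n + 1 - k) else 0)
        = ∑ k ∈ Finset.range (n + 2), f k (n + 1 - k) := by
      refine Finset.sum_congr rfl fun k hk => ?_
      rw [if_pos (by simpa [Nat.lt_succ_iff] using hk)]
    rw [h1, h2]

lemma tri_swap (f : ℕ → ℕ → ℝ) (n : ℕ) :
    ∑ j ∈ Finset.range (n + 1), ∑ k ∈ Finset.range (n + 1 - j), f j k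
      = ∑ k ∈ Finset.range (n + 1), ∑ j ∈ Finset.range (n + 1 - k), f j k := by
  have key : ∀ g : ℕ → ℕ → ℝ,
      ∑ j ∈ Finset.range (n + 1), ∑ k ∈ Finset.range (n + 1 - j), g j k
        = ∑ j ∈ Finset.range (n + 1), ∑ k ∈ Finset.range (n + 1),
            if j + k ≤ n then g j k else 0 := by
    intro g
    refine Finset.sum_congr rfl fun j hj => ?_
    have hj' : j ≤ n := by simpa [Nat.lt_succ_iff] using hj
    rw [← Finset.sum_filter]
    refine (Finset.sum_congr ?_ fun k _ => rfl)
    ext k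
    simp only [Finset.mem_filter, Finset.mem_range]
    omega
  rw [key f, key (fun a b => f b a), Finset.sum_comm]
  exact Finset.sum_congr rfl fun k _ => Finset.sum_congr rfl fun j _ => by
    rw [Nat.add_comm]

lemma schur_key (N : ℕ) (τ : (Fin N → ℝ) → ℝ) (hτ : ContDiff ℝ (⊤:ℕ∞) τ) (t : Fin N → ℝ) :
    ∀ n, ∀ s : Fin N → ℝ,
      ∑ j ∈ Finset.range (n + 1),
          polyOp N (-1) (schurPoly j) τ (t - s) * polyOp N 1 (schurPoly (n - j)) τ (t + s)
        = polyOp N 1 (schurPoly n) (fun s => τ (t + s) * τ (t - s)) s := by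
  intro n
  induction n using Nat.strong_induction_on with
  | _ n IH =>
  cases n with
  | zero =>
    intro s
    have h0 : schurPoly 0 = 1 := by rw [schurPoly]
    rw [Finset.sum_range_one, Nat.sub_zero, h0, polyOp_one, polyOp_one, polyOp_one, mul_comm]
  | succ n =>
    intro s
    have hg : ContDiff ℝ (⊤:ℕ∞) (fun s => τ (t + s) * τ (t - s)) :=
      (hτ.comp (contDiff_const.add contDiff_id)).mul (hτ.comp (contDiff_const.sub contDiff_id))
    have hAc : ∀ j, ContDiff ℝ (⊤:ℕ∞) (polyOp N (-1) (schurPoly j) τ) :=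
      fun j => polyOp_contDiff hτ
    have hBc : ∀ j, ContDiff ℝ (⊤:ℕ∞) (polyOp N 1 (schurPoly j) τ) :=
      fun j => polyOp_contDiff hτ
    apply mul_left_cancel₀ (show ((n:ℝ)+1) ≠ 0 by positivity)
    have hR : ((n:ℝ)+1) * polyOp N 1 (schurPoly (n+1)) (fun s => τ (t + s) * τ (t - s)) s
        = (∑ k ∈ Finset.range (n+1), ∑ j ∈ Finset.range (n+1-k),
            ((k:ℝ)+1) * (pderivOp N (-1) (k+1) (polyOp N (-1) (schurPoly j) τ) (t - s)
              * polyOp N 1 (schurPoly (n-k-j)) τ (t + s)))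
          + (∑ k ∈ Finset.range (n+1), ∑ j ∈ Finset.range (n+1-k),
            ((k:ℝ)+1) * (polyOp N (-1) (schurPoly j) τ (t - s)
              * pderivOp N 1 (k+1) (polyOp N 1 (schurPoly (n-k-j)) τ) (t + s))) := by
      rw [polyOp_schur_succ hg n s, ← Finset.sum_add_distrib]
      refine Finset.sum_congr rfl fun k hk => ?_
      have hk' : k ≤ n := Nat.lt_succ_iff.mp (Finset.mem_range.mp hk)
      have hIH : polyOp N 1 (schurPoly (n-k)) (fun s => τ (t + s) * τ (t - s))
          = fun s => ∑ j ∈ Finset.range (n-k+1),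
              polyOp N (-1) (schurPoly j) τ (t - s) * polyOp N 1 (schurPoly (n-k-j)) τ (t + s) :=
        funext fun s' => (IH (n-k) (by omega) s').symm
      rw [hIH]
      rw [pderivOp_sum (Finset.range (n-k+1))
        (fun j => fun s => polyOp N (-1) (schurPoly j) τ (t - s)
          * polyOp N 1 (schurPoly (n-k-j)) τ (t + s))
        (fun j _ => (((hAc j).comp (contDiff_const.sub contDiff_id)).mul
          ((hBc (n-k-j)).comp (contDiff_const.add contDiff_id))).differentiable
          (by simp))]
      rw [show n-k+1 = n+1-k from by omega]
      rw [Finset.mul_sum, ← Finset.sum_add_distrib]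
      refine Finset.sum_congr rfl fun j hj => ?_
      rw [pderiv_hirota (hAc j) (hBc (n-k-j)) t (k+1)]
      rw [mul_add]
    have hL : ((n:ℝ)+1) * ∑ j ∈ Finset.range (n+1+1),
          polyOp N (-1) (schurPoly j) τ (t - s) * polyOp N 1 (schurPoly (n+1-j)) τ (t + s)
        = (∑ k ∈ Finset.range (n+1), ∑ j ∈ Finset.range (n+1-k),
            ((k:ℝ)+1) * (pderivOp N (-1) (k+1) (polyOp N (-1) (schurPoly j) τ) (t - s)
              * polyOp N 1 (schurPoly (n-k-j)) τ (t + s)))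
          + (∑ k ∈ Finset.range (n+1), ∑ j ∈ Finset.range (n+1-k),
            ((k:ℝ)+1) * (polyOp N (-1) (schurPoly j) τ (t - s)
              * pderivOp N 1 (k+1) (polyOp N 1 (schurPoly (n-k-j)) τ) (t + s))) := by
      rw [Finset.mul_sum]
      have hsplit : ∀ j ∈ Finset.range (n+1+1),
          ((n:ℝ)+1) * (polyOp N (-1) (schurPoly j) τ (t - s)
              * polyOp N 1 (schurPoly (n+1-j)) τ (t + s))
            = (∑ k ∈ Finset.range j, ((k:ℝ)+1)
                  * pderivOp N (-1) (k+1) (polyOp N (-1) (schurPoly (j-1-k)) τ) (t - s))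
                * polyOp N 1 (schurPoly (n+1-j)) τ (t + s)
              + polyOp N (-1) (schurPoly j) τ (t - s)
                * (∑ k ∈ Finset.range (n+1-j), ((k:ℝ)+1)
                  * pderivOp N 1 (k+1) (polyOp N 1 (schurPoly (n+1-j-1-k)) τ) (t + s)) := by
        intro j hj
        have hj' : j ≤ n+1 := Nat.lt_succ_iff.mp (Finset.mem_range.mp hj)
        have e1 : (j:ℝ) * polyOp N (-1) (schurPoly j) τ (t - s)
            = ∑ k ∈ Finset.range j, ((k:ℝ)+1)
                * pderivOp N (-1) (k+1) (polyOp N (-1) (schurPoly (j-1-k)) τ) (t - s) :=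
          polyOp_schur_weighted hτ j (t - s)
        have e2 : ((n+1-j:ℕ):ℝ) * polyOp N 1 (schurPoly (n+1-j)) τ (t + s)
            = ∑ k ∈ Finset.range (n+1-j), ((k:ℝ)+1)
                * pderivOp N 1 (k+1) (polyOp N 1 (schurPoly (n+1-j-1-k)) τ) (t + s) :=
          polyOp_schur_weighted hτ (n+1-j) (t + s)
        have hcast : ((n:ℝ)+1) = (j:ℝ) + ((n+1-j:ℕ):ℝ) := by
          rw [Nat.cast_sub hj']
          push_cast
          ring
        calc ((n:ℝ)+1) * (polyOp N (-1) (schurPoly j) τ (t - s)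
                * polyOp N 1 (schurPoly (n+1-j)) τ (t + s))
            = ((j:ℝ) * polyOp N (-1) (schurPoly j) τ (t - s))
                * polyOp N 1 (schurPoly (n+1-j)) τ (t + s)
              + polyOp N (-1) (schurPoly j) τ (t - s)
                * (((n+1-j:ℕ):ℝ) * polyOp N 1 (schurPoly (n+1-j)) τ (t + s)) := by
              rw [hcast]; ring
          _ = _ := by rw [e1, e2]
      rw [Finset.sum_congr rfl hsplit, Finset.sum_add_distrib]
      congr 1
      · calc
          ∑ j ∈ Finset.range (n+1+1),
              (∑ k ∈ Finset.range j, ((k:ℝ)+1)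
                * pderivOp N (-1) (k+1) (polyOp N (-1) (schurPoly (j-1-k)) τ) (t - s))
              * polyOp N 1 (schurPoly (n+1-j)) τ (t + s)
            = ∑ j ∈ Finset.range (n+1+1), ∑ k ∈ Finset.range j,
                ((k:ℝ)+1) * pderivOp N (-1) (k+1) (polyOp N (-1) (schurPoly (j-1-k)) τ) (t - s)
                  * polyOp N 1 (schurPoly (n+1-j)) τ (t + s) :=
              Finset.sum_congr rfl fun j _ => Finset.sum_mul _ _ _
          _ = ∑ m ∈ Finset.range (n+1), ∑ k ∈ Finset.range (m+1),
                ((k:ℝ)+1) * pderivOp N (-1) (k+1) (polyOp N (-1) (schurPoly (m+1-1-k)) τ) (t - s)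
                  * polyOp N 1 (schurPoly (n+1-(m+1))) τ (t + s) := by
              rw [Finset.sum_range_succ']
              simp only [Finset.range_zero, Finset.sum_empty, Finset.sum_const_zero, add_zero]
          _ = ∑ m ∈ Finset.range (n+1), ∑ k ∈ Finset.range (m+1),
                ((k:ℝ)+1) * pderivOp N (-1) (k+1) (polyOp N (-1) (schurPoly (m-k)) τ) (t - s)
                  * polyOp N 1 (schurPoly (n-k-(m-k))) τ (t + s) :=
              Finset.sum_congr rfl fun m _ => Finset.sum_congr rfl fun k hk => by
                have hkm := Nat.lt_succ_iff.mp (Finset.mem_range.mp hk)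
                rw [show m+1-1-k = m-k from by omega,
                  show n+1-(m+1) = n-k-(m-k) from by omega]
          _ = ∑ k ∈ Finset.range (n+1), ∑ i ∈ Finset.range (n+1-k),
                ((k:ℝ)+1) * pderivOp N (-1) (k+1) (polyOp N (-1) (schurPoly i) τ) (t - s)
                  * polyOp N 1 (schurPoly (n-k-i)) τ (t + s) :=
              tri_reindex (fun k i => ((k:ℝ)+1)
                * pderivOp N (-1) (k+1) (polyOp N (-1) (schurPoly i) τ) (t - s)
                * polyOp N 1 (schurPoly (n-k-i)) τ (t + s)) n
          _ = _ := Finset.sum_congr rfl fun k _ => Finset.sum_congr rfl fun i _ =>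
              mul_assoc _ _ _
      · calc
          ∑ j ∈ Finset.range (n+1+1), polyOp N (-1) (schurPoly j) τ (t - s)
              * (∑ k ∈ Finset.range (n+1-j), ((k:ℝ)+1)
                * pderivOp N 1 (k+1) (polyOp N 1 (schurPoly (n+1-j-1-k)) τ) (t + s))
            = ∑ j ∈ Finset.range (n+1+1), ∑ k ∈ Finset.range (n+1-j),
                polyOp N (-1) (schurPoly j) τ (t - s)
                  * (((k:ℝ)+1) * pderivOp N 1 (k+1) (polyOp N 1 (schurPoly (n+1-j-1-k)) τ) (t + s)) :=
              Finset.sum_congr rfl fun j _ => Finset.mul_sum _ _ _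
          _ = ∑ j ∈ Finset.range (n+1+1), ∑ k ∈ Finset.range (n+1-j),
                polyOp N (-1) (schurPoly j) τ (t - s)
                  * (((k:ℝ)+1) * pderivOp N 1 (k+1) (polyOp N 1 (schurPoly (n-j-k)) τ) (t + s)) :=
              Finset.sum_congr rfl fun j _ => Finset.sum_congr rfl fun k _ => by
                rw [show n+1-j-1-k = n-j-k from by omega]
          _ = ∑ j ∈ Finset.range (n+1), ∑ k ∈ Finset.range (n+1-j),
                polyOp N (-1) (schurPoly j) τ (t - s)
                  * (((k:ℝ)+1) * pderivOp N 1 (k+1) (polyOp N 1 (schurPoly (n-j-k)) τ) (t + s)) := by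
              rw [Finset.sum_range_succ]
              simp only [show n+1-(n+1) = 0 from by omega, Finset.range_zero,
                Finset.sum_empty, add_zero]
          _ = ∑ k ∈ Finset.range (n+1), ∑ j ∈ Finset.range (n+1-k),
                polyOp N (-1) (schurPoly j) τ (t - s)
                  * (((k:ℝ)+1) * pderivOp N 1 (k+1) (polyOp N 1 (schurPoly (n-j-k)) τ) (t + s)) :=
              tri_swap (fun j k => polyOp N (-1) (schurPoly j) τ (t - s)
                * (((k:ℝ)+1) * pderivOp N 1 (k+1) (polyOp N 1 (schurPoly (n-j-k)) τ) (t + s))) n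
          _ = _ := Finset.sum_congr rfl fun k _ => Finset.sum_congr rfl fun j _ => by
              rw [show n-j-k = n-k-j from by omega]; ring
    rw [hR, hL]

end Lemmas

/-- Proposition 3.1: `Σ_{j=0}^n p_j(−∂̃)τ · p_{n−j}(∂̃)τ = p_n(∂̃) τ·τ`, where the
right-hand side is the Hirota bilinear action: the operator obtained from `p_n` by
`y_k ↦ (1/k)∂/∂s_k` applied to `s ↦ τ(t+s)τ(t−s)`, evaluated at `s = 0`. -/
theorem schur_convolution_hirota (N n : ℕ) (hn : n ≤ N) (τ : (Fin N → ℝ) → ℝ)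
    (hτ : ContDiff ℝ (⊤ : ℕ∞) τ) (t : Fin N → ℝ) :
    ∑ j ∈ Finset.range (n + 1),
        polyOp N (-1) (schurPoly j) τ t * polyOp N 1 (schurPoly (n - j)) τ t =
      polyOp N 1 (schurPoly n) (fun s => τ (t + s) * τ (t - s)) 0 := by
  have hτ' : ContDiff ℝ (⊤:ℕ∞) τ := hτ.of_le (by simp)
  have h := schur_key N τ hτ' t n 0
  simpa using h
end
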